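/- Let μ be the probability measure on K = (0,1)³ × {0,1} with density (6/π²)·𝟙{0<B<1−A}·𝟙{0<Q<1/(2−A−B)}/(1−A) dA dB dQ times counting measure on N, and for h' ∈ (−1,1) let P(·,·|h') be the pushforward of μ under (A,B,Q,N) ↦ 𝐓_{A,B,Q,N}(h'). Then for every h' ∈ (−1,1), P(·,·|h') is a probability measure on ℝ₊ × [−1,1], and P(·,·|−h') is the image of P(·,·|h') under the map (s,h) ↦ (s,−h). -/

import Mathlib

open Set

/-- The three-branch limiting transfer map `𝐓_{A,B,Q,N}` of the periodic Lorentz gas,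
for impact parameters `h' ∈ [−1,1]`, with `Q' = (1 − Q(1−B))/(1−A)`. -/
noncomputable def transferMap (A B Q : ℝ) (N : ℕ) (h' : ℝ) : ℝ × ℝ :=
  if (-1:ℝ)^N * h' > 1 - 2*A then
    (Q, h' - 2*(-1:ℝ)^N*(1 - A))
  else if (-1:ℝ)^N * h' < -1 + 2*B then
    ((1 - Q*(1 - B))/(1 - A), h' + 2*(-1:ℝ)^N*(1 - B))
  else
    ((1 - Q*(1 - B))/(1 - A) + Q, h' + 2*(-1:ℝ)^N*(A - B))

open MeasureTheory

/-- The limiting parameter measure `μ` on `K = (0,1)³ × {0,1}` (`{0,1}` encoded as `Bool`),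
with density `(6/π²)·𝟙{0<A<1}·𝟙{0<B<1−A}·𝟙{0<Q<1/(2−A−B)}/(1−A)` with respect to
`dA dB dQ` times counting measure on `N`. -/
noncomputable def lorentzMu : Measure ((ℝ × ℝ × ℝ) × Bool) :=
  ((volume : Measure (ℝ × ℝ × ℝ)).withDensity fun p =>
    ENNReal.ofReal
      (if 0 < p.1 ∧ p.1 < 1 ∧ 0 < p.2.1 ∧ p.2.1 < 1 - p.1 ∧
          0 < p.2.2 ∧ p.2.2 < 1/(2 - p.1 - p.2.1) then
        (6 / Real.pi ^ 2) / (1 - p.1) else 0)).prod (Measure.count : Measure Bool)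

/-- The transition probability `P(·,·|h')`: the pushforward of `μ` under
`(A,B,Q,N) ↦ 𝐓_{A,B,Q,N}(h')`. -/
noncomputable def transitionProb (h' : ℝ) : Measure (ℝ × ℝ) :=
  lorentzMu.map fun p => transferMap p.1.1 p.1.2.1 p.1.2.2 p.2.toNat h'

/-!
Integrating out `Q`, then `B`, leaves `∫₀¹ (6/π²) log(2 - A)/(1 - A) dA` per value of `N`;
substituting `u = 1 - A` and integrating the series `log(1 + u)/u = ∑ (-u)ⁿ/(n + 1)` termwise
gives `∫₀¹ log(1 + u)/u du = ∑ (-1)ⁿ/(n + 1)² = π²/12`, so `μ` has mass `2 · (6/π²) · π²/12 = 1`.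
On the support of `μ` every branch of `𝐓` has positive first coordinate and maps `[-1,1]` into
itself. The symmetry comes from `𝐓_{A,B,Q,N+1}(h') = (s, -h)` for `(s, h) = 𝐓_{A,B,Q,N}(-h')`
and the invariance of counting measure on `{0,1}` under `N ↦ 1 - N`.
-/

open Real
open scoped ENNReal

theorem hasSum_one_div_succ_sq :
    HasSum (fun n : ℕ => 1 / ((n : ℝ) + 1) ^ 2) (π ^ 2 / 6) := by
  have h := (hasSum_nat_add_iff' 1).2 hasSum_zeta_two
  simp only [Finset.range_one, Finset.sum_singleton, Nat.cast_zero, Nat.cast_add,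
    Nat.cast_one] at h
  norm_num at h
  exact h.congr_fun fun n => one_div _

theorem hasSum_neg_one_pow_div_succ_sq :
    HasSum (fun n : ℕ => (-1) ^ n / ((n : ℝ) + 1) ^ 2) (π ^ 2 / 12) := by
  -- `1 - (-1)ⁿ` kills the even terms and doubles the odd ones, which add up to `ζ(2)/4`
  have hodd : HasSum (fun n : ℕ => (1 - (-1) ^ n) / ((n : ℝ) + 1) ^ 2) (0 + π ^ 2 / 12) := by
    refine HasSum.even_add_odd (f := fun n : ℕ => (1 - (-1) ^ n) / ((n : ℝ) + 1) ^ 2) ?_ ?_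
    · simp [pow_mul, hasSum_zero]
    · have h := hasSum_one_div_succ_sq.mul_left (1 / 2)
      rw [show 1 / 2 * (π ^ 2 / 6) = π ^ 2 / 12 by ring] at h
      refine h.congr_fun fun k => ?_
      push_cast
      rw [pow_succ, pow_mul]
      field_simp
      ring
  rw [zero_add] at hodd
  have h := hasSum_one_div_succ_sq.sub hodd
  rw [show π ^ 2 / 6 - π ^ 2 / 12 = π ^ 2 / 12 by ring] at h
  exact h.congr_fun fun n => by ring

theorem hasSum_log_one_add_div_self {u : ℝ} (hu₀ : u ≠ 0) (hu : |u| < 1) :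
    HasSum (fun n : ℕ => (-1) ^ n * u ^ n / (n + 1)) (log (1 + u) / u) := by
  have h := (hasSum_pow_div_log_of_abs_lt_one (x := -u) (by rwa [abs_neg])).div_const (-u)
  rw [sub_neg_eq_add, neg_div_neg_eq] at h
  refine h.congr_fun fun n => ?_
  rw [pow_succ, neg_pow u n]
  field_simp

theorem setIntegral_Ioo_zero_one_pow (n : ℕ) : ∫ u in Ioo (0 : ℝ) 1, u ^ n = 1 / (n + 1) := by
  rw [← integral_Ioc_eq_integral_Ioo, ← intervalIntegral.integral_of_le zero_le_one,
    integral_pow]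
  simp

theorem integral_log_one_add_div_self :
    ∫ u in (0 : ℝ)..1, log (1 + u) / u = π ^ 2 / 12 := by
  set F : ℕ → ℝ → ℝ := fun n u => (-1) ^ n * u ^ n / (n + 1)
  have hF_int (n : ℕ) : IntegrableOn (F n) (Ioo 0 1) :=
    (Continuous.integrableOn_Icc (by fun_prop)).mono_set Ioo_subset_Icc_self
  have hF (n : ℕ) : ∫ u in Ioo (0 : ℝ) 1, F n u = (-1) ^ n / ((n : ℝ) + 1) ^ 2 := by
    simp only [F, mul_div_right_comm _ (_ ^ n), integral_const_mul,
      setIntegral_Ioo_zero_one_pow]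
    field_simp
  have hF_norm (n : ℕ) : ∫ u in Ioo (0 : ℝ) 1, ‖F n u‖ = 1 / ((n : ℝ) + 1) ^ 2 := by
    rw [setIntegral_congr_fun measurableSet_Ioo (g := fun u : ℝ => u ^ n / (n + 1))]
    · rw [integral_div, setIntegral_Ioo_zero_one_pow]
      field_simp
    · intro u hu
      simp [F, abs_of_pos hu.1, abs_of_pos (n.cast_add_one_pos (α := ℝ))]
  have h := hasSum_integral_of_summable_integral_norm hF_int
    (by simpa only [hF_norm] using hasSum_one_div_succ_sq.summable)
  simp only [hF] at h
  rw [intervalIntegral.integral_of_le zero_le_one, integral_Ioc_eq_integral_Ioo,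
    hasSum_neg_one_pow_div_succ_sq.unique h]
  refine setIntegral_congr_fun measurableSet_Ioo fun u hu => ?_
  exact (hasSum_log_one_add_div_self hu.1.ne' (by rw [abs_of_pos hu.1]; exact hu.2)).tsum_eq.symm

theorem intervalIntegrable_log_one_add_div_self :
    IntervalIntegrable (fun u => log (1 + u) / u) volume 0 1 := by
  refine IntervalIntegrable.mono_fun' (g := fun _ => 1) intervalIntegrable_const
    (Measurable.aestronglyMeasurable (by fun_prop)) ?_
  rw [uIoc_of_le zero_le_one]
  filter_upwards [ae_restrict_mem measurableSet_Ioc] with u hu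
  have hlog : log (1 + u) ≤ u := by
    linarith [log_le_sub_one_of_pos (x := 1 + u) (by linarith [hu.1])]
  rw [norm_of_nonneg (div_nonneg (log_nonneg (by linarith [hu.1])) hu.1.le)]
  exact div_le_one_of_le₀ hlog hu.1.le

theorem intervalIntegrable_log_two_sub_div_one_sub :
    IntervalIntegrable (fun A => log (2 - A) / (1 - A)) volume 0 1 := by
  have h := intervalIntegrable_log_one_add_div_self.comp_sub_left 1
  simp only [sub_zero, sub_self] at h
  convert h.symm using 2 with A
  ring_nf

theorem integral_log_two_sub_div_one_sub :
    ∫ A in (0 : ℝ)..1, log (2 - A) / (1 - A) = π ^ 2 / 12 := by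
  have h := intervalIntegral.integral_comp_sub_left (fun u => log (1 + u) / u)
    (a := 0) (b := 1) 1
  simp only [sub_zero, sub_self] at h
  rw [← integral_log_one_add_div_self, ← h]
  congr 1 with A
  ring_nf

theorem integral_inv_sub {b d : ℝ} (hb : 0 ≤ b) (hbd : b < d) :
    ∫ x in (0 : ℝ)..b, (d - x)⁻¹ = log (d / (d - b)) := by
  rw [intervalIntegral.integral_comp_sub_left (fun x => x⁻¹), sub_zero,
    integral_inv_of_pos (by linarith) (by linarith)]

theorem lintegral_prod_prod {α β γ : Type*} [MeasurableSpace α] [MeasurableSpace β]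
    [MeasurableSpace γ] {μ : Measure α} {ν : Measure β} {ρ : Measure γ} [SFinite ν] [SFinite ρ]
    {f : α × β × γ → ℝ≥0∞} (hf : Measurable f) :
    ∫⁻ p, f p ∂μ.prod (ν.prod ρ) = ∫⁻ x, ∫⁻ y, ∫⁻ z, f (x, y, z) ∂ρ ∂ν ∂μ := by
  rw [lintegral_prod _ hf.aemeasurable]
  refine lintegral_congr fun x => ?_
  exact lintegral_prod _ (hf.comp measurable_prodMk_left).aemeasurable

theorem lintegral_ofReal_ite_Ioo {f : ℝ → ℝ} {a b I : ℝ} (hab : a ≤ b)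
    (hf : IntervalIntegrable f volume a b) (hf₀ : ∀ x ∈ Ioo a b, 0 ≤ f x)
    (hI : ∫ x in a..b, f x = I) :
    ∫⁻ x, ENNReal.ofReal (if a < x ∧ x < b then f x else 0) = ENNReal.ofReal I := by
  have hf' : IntegrableOn f (Ioo a b) := (intervalIntegrable_iff_integrableOn_Ioo_of_le hab).1 hf
  rw [← hI, intervalIntegral.integral_of_le hab, integral_Ioc_eq_integral_Ioo,
    ofReal_integral_eq_lintegral_ofReal hf' ((ae_restrict_iff' measurableSet_Ioo).2
      (ae_of_all _ hf₀)), ← lintegral_indicator measurableSet_Ioo]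
  congr 1 with x
  by_cases hx : x ∈ Ioo a b
  · simp [hx.1, hx.2]
  · simp [hx, show ¬ (a < x ∧ x < b) from hx]

theorem lintegral_ofReal_ite_and_Ioo (P : Prop) [Decidable P] {f : ℝ → ℝ} {a b I : ℝ}
    (hab : P → a ≤ b) (hf : P → IntervalIntegrable f volume a b)
    (hf₀ : P → ∀ x ∈ Ioo a b, 0 ≤ f x) (hI : P → ∫ x in a..b, f x = I) :
    ∫⁻ x, ENNReal.ofReal (if P ∧ a < x ∧ x < b then f x else 0) =
      ENNReal.ofReal (if P then I else 0) := by
  by_cases hP : P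
  · simpa [hP] using lintegral_ofReal_ite_Ioo (hab hP) (hf hP) (hf₀ hP) (hI hP)
  · simp [hP]

theorem map_count_of_bijective {α β : Type*} [MeasurableSpace α] [MeasurableSpace β]
    {f : α → β} (hf : Function.Bijective f) (hfm : Measurable f) :
    (Measure.count : Measure α).map f = Measure.count := by
  ext s hs
  rw [Measure.map_apply hfm hs, Measure.count_apply (hfm hs), Measure.count_apply hs,
    encard_preimage_of_bijective hf]

theorem transferMap_mem_Ioi_prod_Icc {A B Q h' : ℝ} (N : ℕ) (hA₀ : 0 ≤ A) (hA₁ : A < 1)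
    (hB₀ : 0 ≤ B) (hB₁ : B ≤ 1) (hQ₀ : 0 < Q) (hQ₁ : Q * (1 - B) < 1) (hh' : h' ∈ Icc (-1) 1) :
    transferMap A B Q N h' ∈ Ioi 0 ×ˢ Icc (-1) 1 := by
  have hQ' : 0 < (1 - Q * (1 - B)) / (1 - A) := div_pos (by linarith) (by linarith)
  obtain ⟨hh'₁, hh'₂⟩ := hh'
  rcases neg_one_pow_eq_or ℝ N with hN | hN <;>
    simp only [transferMap, hN, one_mul, neg_one_mul, mem_prod, mem_Ioi, mem_Icc] <;>
    split_ifs <;> exact ⟨by positivity, by constructor <;> linarith⟩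

theorem transferMap_succ (A B Q : ℝ) (N : ℕ) (h' : ℝ) :
    transferMap A B Q (N + 1) h' =
      ((transferMap A B Q N (-h')).1, -(transferMap A B Q N (-h')).2) := by
  simp only [transferMap, pow_succ, mul_neg, mul_one, neg_mul]
  split_ifs <;> simp only [Prod.mk.injEq, true_and] <;> ring

theorem transferMap_not_toNat (A B Q : ℝ) (b : Bool) (h' : ℝ) :
    transferMap A B Q (!b).toNat (-h') =
      ((transferMap A B Q b.toNat h').1, -(transferMap A B Q b.toNat h').2) := by
  cases b
  · simpa using transferMap_succ A B Q 0 (-h')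
  · simp [transferMap_succ A B Q 0 h']

theorem measurable_transferMap (N : ℕ) (h' : ℝ) :
    Measurable fun p : ℝ × ℝ × ℝ => transferMap p.1 p.2.1 p.2.2 N h' := by
  unfold transferMap
  exact Measurable.ite (measurableSet_lt (by fun_prop) (by fun_prop)) (by fun_prop)
    (Measurable.ite (measurableSet_lt (by fun_prop) (by fun_prop)) (by fun_prop) (by fun_prop))

theorem measurable_transferMap_toNat (h' : ℝ) :
    Measurable fun p : (ℝ × ℝ × ℝ) × Bool => transferMap p.1.1 p.1.2.1 p.1.2.2 p.2.toNat h' :=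
  measurable_from_prod_countable_left fun b => measurable_transferMap b.toNat h'

def lorentzSupport : Set (ℝ × ℝ × ℝ) :=
  {p | ((0 < p.1 ∧ p.1 < 1) ∧ 0 < p.2.1 ∧ p.2.1 < 1 - p.1) ∧ 0 < p.2.2 ∧
    p.2.2 < 1 / (2 - p.1 - p.2.1)}

-- The conditions are grouped so that those on `Q`, then on `B`, split off as the last conjunct.
noncomputable def lorentzDensity (p : ℝ × ℝ × ℝ) : ℝ :=
  if ((0 < p.1 ∧ p.1 < 1) ∧ 0 < p.2.1 ∧ p.2.1 < 1 - p.1) ∧ 0 < p.2.2 ∧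
    p.2.2 < 1 / (2 - p.1 - p.2.1) then 6 / π ^ 2 / (1 - p.1) else 0

theorem lorentzMu_eq : lorentzMu = ((volume : Measure (ℝ × ℝ × ℝ)).withDensity fun p =>
    ENNReal.ofReal (lorentzDensity p)).prod (Measure.count : Measure Bool) := by
  simp only [lorentzMu, lorentzDensity, and_assoc]

theorem measurableSet_lorentzSupport : MeasurableSet lorentzSupport := by
  simp only [lorentzSupport, Set.ofPred_and]
  refine .inter (.inter (.inter ?_ ?_) (.inter ?_ ?_)) (.inter ?_ ?_) <;>
    exact measurableSet_lt (by fun_prop) (by fun_prop)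

theorem measurable_lorentzDensity : Measurable lorentzDensity :=
  Measurable.ite measurableSet_lorentzSupport (by fun_prop) measurable_const
theorem lintegral_lorentzDensity_Q (A B : ℝ) :
    ∫⁻ Q, ENNReal.ofReal (lorentzDensity (A, B, Q)) =
      ENNReal.ofReal (if (0 < A ∧ A < 1) ∧ 0 < B ∧ B < 1 - A then
        6 / π ^ 2 / (1 - A) / (2 - A - B) else 0) := by
  simp only [lorentzDensity]
  refine lintegral_ofReal_ite_and_Ioo _ (fun h => ?_) (fun _ => intervalIntegrable_const)
    (fun h _ _ => ?_) (fun h => ?_)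
  · have : 0 < 2 - A - B := by linarith [h.1.2, h.2.2]
    positivity
  · have : 0 < 1 - A := by linarith [h.1.2]
    positivity
  · simp only [intervalIntegral.integral_const, smul_eq_mul]
    ring

theorem lintegral_lintegral_lorentzDensity (A : ℝ) :
    ∫⁻ B, ∫⁻ Q, ENNReal.ofReal (lorentzDensity (A, B, Q)) =
      ENNReal.ofReal (if 0 < A ∧ A < 1 then 6 / π ^ 2 * (log (2 - A) / (1 - A)) else 0) := by
  simp only [lintegral_lorentzDensity_Q]
  refine lintegral_ofReal_ite_and_Ioo _ (fun h => ?_) (fun h => ?_) (fun h B hB => ?_)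
    (fun h => ?_)
  · linarith [h.2]
  · refine ContinuousOn.intervalIntegrable fun B hB => ?_
    rw [uIcc_of_le (by linarith [h.2])] at hB
    have : 2 - A - B ≠ 0 := by linarith [hB.2]
    fun_prop (disch := assumption)
  · have : 0 < 1 - A := by linarith [h.2]
    have : 0 < 2 - A - B := by linarith [hB.2]
    positivity
  · have h₁ := integral_inv_sub (b := 1 - A) (d := 2 - A) (by linarith [h.2]) (by linarith)
    simp only [div_eq_mul_inv, intervalIntegral.integral_const_mul] at h₁ ⊢
    rw [h₁]
    ring_nf

theorem lintegral_lorentzDensity :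
    ∫⁻ p : ℝ × ℝ × ℝ, ENNReal.ofReal (lorentzDensity p) = 2⁻¹ := by
  rw [Measure.volume_eq_prod, Measure.volume_eq_prod,
    lintegral_prod_prod measurable_lorentzDensity.ennreal_ofReal]
  have h_nonneg (A : ℝ) (hA : A ∈ Ioo 0 1) : 0 ≤ 6 / π ^ 2 * (log (2 - A) / (1 - A)) := by
    have : 0 < 1 - A := by linarith [hA.2]
    have : 0 ≤ log (2 - A) := log_nonneg (by linarith [hA.2])
    positivity
  have h_int : ∫ A in (0 : ℝ)..1, 6 / π ^ 2 * (log (2 - A) / (1 - A)) = 2⁻¹ := by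
    rw [intervalIntegral.integral_const_mul, integral_log_two_sub_div_one_sub]
    field_simp
    norm_num
  simp only [lintegral_lintegral_lorentzDensity]
  rw [lintegral_ofReal_ite_Ioo zero_le_one
    (intervalIntegrable_log_two_sub_div_one_sub.const_mul _) h_nonneg h_int]
  simp

theorem lorentzMu_univ : lorentzMu univ = 1 := by
  rw [lorentzMu_eq, ← univ_prod_univ, Measure.prod_prod, withDensity_apply _ .univ,
    Measure.restrict_univ, lintegral_lorentzDensity, Measure.count_univ]
  simpa using ENNReal.inv_mul_cancel two_ne_zero ENNReal.ofNat_ne_top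

theorem ae_lorentzMu_mem_lorentzSupport : ∀ᵐ p ∂lorentzMu, p.1 ∈ lorentzSupport := by
  rw [lorentzMu_eq]
  refine Measure.quasiMeasurePreserving_fst.ae (p := (· ∈ lorentzSupport)) ?_
  refine (ae_withDensity_iff measurable_lorentzDensity.ennreal_ofReal).2 (ae_of_all _ ?_)
  intro p hp
  by_contra hp'
  simp only [lorentzDensity, ne_eq, ENNReal.ofReal_eq_zero, not_le] at hp
  exact hp.ne' (if_neg hp')

theorem measurePreserving_prodMap_id_not :
    MeasurePreserving (Prod.map id not) lorentzMu lorentzMu := by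
  rw [lorentzMu_eq]
  exact (MeasurePreserving.id _).prod
    ⟨measurable_from_top, map_count_of_bijective Bool.involutive_not.bijective measurable_from_top⟩

theorem transferMap_mem_of_mem_lorentzSupport {p : ℝ × ℝ × ℝ} (hp : p ∈ lorentzSupport)
    (N : ℕ) {h' : ℝ} (hh' : h' ∈ Icc (-1) 1) :
    transferMap p.1 p.2.1 p.2.2 N h' ∈ Ioi 0 ×ˢ Icc (-1) 1 := by
  obtain ⟨⟨⟨hA₀, hA₁⟩, hB₀, hB₁⟩, hQ₀, hQ₁⟩ := hp
  rw [lt_div_iff₀ (by linarith)] at hQ₁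
  exact transferMap_mem_Ioi_prod_Icc N hA₀.le hA₁ hB₀.le (by linarith) hQ₀ (by nlinarith) hh'

/-- For every `h' ∈ (−1,1)`, `P(·,·|h')` is a probability measure concentrated on
`ℝ₊ × [−1,1]`, and `P(·,·|−h')` is the image of `P(·,·|h')` under `(s,h) ↦ (s,−h)`. -/
theorem transitionProb_isProbability_and_symm (h' : ℝ) (hh' : h' ∈ Set.Ioo (-1:ℝ) 1) :
    IsProbabilityMeasure (transitionProb h') ∧
    transitionProb h' {p : ℝ × ℝ | ¬ (0 < p.1 ∧ p.2 ∈ Set.Icc (-1:ℝ) 1)} = 0 ∧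
    transitionProb (-h') = (transitionProb h').map (fun q : ℝ × ℝ => (q.1, -q.2)) := by
  have hT := measurable_transferMap_toNat h'
  refine ⟨⟨?_⟩, ?_, ?_⟩
  · rw [transitionProb, Measure.map_apply hT .univ, preimage_univ, lorentzMu_univ]
  · rw [transitionProb, ← ae_iff]
    refine (ae_map_iff hT.aemeasurable (measurableSet_Ioi.prod measurableSet_Icc)).2 ?_
    filter_upwards [ae_lorentzMu_mem_lorentzSupport] with p hp
    exact transferMap_mem_of_mem_lorentzSupport hp _ (Ioo_subset_Icc_self hh')
  · have hflip := measurePreserving_prodMap_id_not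
    rw [transitionProb, transitionProb, Measure.map_map (by fun_prop) hT]
    conv_lhs => rw [← hflip.map_eq, Measure.map_map (measurable_transferMap_toNat _)
      hflip.measurable]
    congr 1 with p : 1
    exact transferMap_not_toNat _ _ _ p.2 h'
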